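/- arXiv:1301.2942 — 2 statements merged into one kernel-verified Lean document; each statement's English description precedes it below -/
import Mathlib

section
/- Let n ≥ 2, let λ = (λ_{i,jk}) be a family of elements of 𝕋 indexed by 1 ≤ i ≤ k and 1 ≤ j < k ≤ n, and let φ be an automorphism of G(n) such that φ(v_{jk}) = v_{jk} for all 1 ≤ j < k ≤ n and φ(u_i) = z_i u_i for some central elements z_i ∈ V(n) (1 ≤ i ≤ n). Then the multiplier σ_λ∘(φ×φ) of G(n), defined by (r,s) ↦ σ_λ(φ(r), φ(s)), is similar to σ_λ. -/
open scoped BigOperators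

namespace FreeNilp

/-- Index set for pairs `(j,k)` with `j < k`. -/
abbrev PairIdx (n : ℕ) : Type := {p : Fin n × Fin n // p.1 < p.2}

/-- The free nilpotent group of class 2 and rank `n`, realized on
`ℤ^n × ℤ^{n(n-1)/2}`. -/
@[ext] structure G (n : ℕ) where
  u : Fin n → ℤ
  v : PairIdx n → ℤ

namespace G

instance (n : ℕ) : Group (G n) where
  mul r s := ⟨fun i => r.u i + s.u i, fun p => r.v p + s.v p + r.u p.1.1 * s.u p.1.2⟩
  one := ⟨fun _ => 0, fun _ => 0⟩
  inv r := ⟨fun i => -r.u i, fun p => -r.v p + r.u p.1.1 * r.u p.1.2⟩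
  mul_assoc r s t := by
    refine G.ext ?_ ?_ <;> funext x
    · show (r.u x + s.u x) + t.u x = r.u x + (s.u x + t.u x)
      ring
    · show (r.v x + s.v x + r.u x.1.1 * s.u x.1.2) + t.v x +
          (r.u x.1.1 + s.u x.1.1) * t.u x.1.2 =
        r.v x + (s.v x + t.v x + s.u x.1.1 * t.u x.1.2) +
          r.u x.1.1 * (s.u x.1.2 + t.u x.1.2)
      ring
  one_mul r := by
    refine G.ext ?_ ?_ <;> funext x
    · show 0 + r.u x = r.u x
      ring
    · show 0 + r.v x + 0 * r.u x.1.2 = r.v x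
      ring
  mul_one r := by
    refine G.ext ?_ ?_ <;> funext x
    · show r.u x + 0 = r.u x
      ring
    · show r.v x + 0 + r.u x.1.1 * 0 = r.v x
      ring
  inv_mul_cancel r := by
    refine G.ext ?_ ?_ <;> funext x
    · show -r.u x + r.u x = 0
      ring
    · show (-r.v x + r.u x.1.1 * r.u x.1.2) + r.v x + -r.u x.1.1 * r.u x.1.2 = 0
      ring

@[simp] lemma mul_u {n : ℕ} (r s : G n) (i : Fin n) : (r * s).u i = r.u i + s.u i := rfl
@[simp] lemma mul_v {n : ℕ} (r s : G n) (p : PairIdx n) :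
    (r * s).v p = r.v p + s.v p + r.u p.1.1 * s.u p.1.2 := rfl
@[simp] lemma one_u {n : ℕ} (i : Fin n) : (1 : G n).u i = 0 := rfl
@[simp] lemma one_v {n : ℕ} (p : PairIdx n) : (1 : G n).v p = 0 := rfl
@[simp] lemma inv_u {n : ℕ} (r : G n) (i : Fin n) : (r⁻¹).u i = -r.u i := rfl
@[simp] lemma inv_v {n : ℕ} (r : G n) (p : PairIdx n) :
    (r⁻¹).v p = -r.v p + r.u p.1.1 * r.u p.1.2 := rfl

end G

/-- First-block coordinate `r_i`. -/
def uc {n : ℕ} (r : G n) (i : Fin n) : ℤ := r.u i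

/-- Second-block coordinate `r_{jk}` (zero unless `j < k`). -/
def vc {n : ℕ} (r : G n) (j k : Fin n) : ℤ := if h : j < k then r.v ⟨(j, k), h⟩ else 0

/-- A multiplier (2-cocycle with values in the circle group) of a group. -/
def IsMultiplier {Γ : Type*} [Group Γ] (σ : Γ → Γ → Circle) : Prop :=
  (∀ r s t : Γ, σ r s * σ (r * s) t = σ r (s * t) * σ s t) ∧
  ∀ r : Γ, σ r 1 = 1 ∧ σ 1 r = 1

/-- Similarity (cohomology) of multipliers. -/
def Similar {Γ : Type*} [Group Γ] (σ τ : Γ → Γ → Circle) : Prop :=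
  ∃ β : Γ → Circle, ∀ r s : Γ, τ r s = β r * β s * (β (r * s))⁻¹ * σ r s

/-- The subgroup `H(n) ≅ ℤⁿ` of `G n`: only the coordinates `r_n` and `r_{jn}` may
be nonzero. -/
def Hsub (n : ℕ) : Subgroup (G n) where
  carrier := {r | (∀ i : Fin n, (i : ℕ) + 1 < n → r.u i = 0) ∧
                  ∀ p : PairIdx n, (p.1.2 : ℕ) + 1 < n → r.v p = 0}
  one_mem' := ⟨fun _ _ => rfl, fun _ _ => rfl⟩
  mul_mem' := by
    rintro r s ⟨hr1, hr2⟩ ⟨hs1, hs2⟩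
    refine ⟨fun i hi => ?_, fun p hp => ?_⟩
    · simp [hr1 i hi, hs1 i hi]
    · simp [hr2 p hp, hs2 p hp, hs1 p.1.2 hp]
  inv_mem' := by
    rintro r ⟨hr1, hr2⟩
    refine ⟨fun i hi => ?_, fun p hp => ?_⟩
    · simp [hr1 i hi]
    · simp [hr2 p hp, hr1 p.1.2 hp]

/-- The subgroup `G(n-1)` of `G n`: the coordinates `r_n` and `r_{jn}` vanish. -/
def Gsub (n : ℕ) : Subgroup (G n) where
  carrier := {r | (∀ i : Fin n, (i : ℕ) + 1 = n → r.u i = 0) ∧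
                  ∀ p : PairIdx n, (p.1.2 : ℕ) + 1 = n → r.v p = 0}
  one_mem' := ⟨fun _ _ => rfl, fun _ _ => rfl⟩
  mul_mem' := by
    rintro r s ⟨hr1, hr2⟩ ⟨hs1, hs2⟩
    refine ⟨fun i hi => ?_, fun p hp => ?_⟩
    · simp [hr1 i hi, hs1 i hi]
    · simp [hr2 p hp, hs2 p hp, hs1 p.1.2 hp]
  inv_mem' := by
    rintro r ⟨hr1, hr2⟩
    refine ⟨fun i hi => ?_, fun p hp => ?_⟩
    · simp [hr1 i hi]
    · simp [hr2 p hp, hr1 p.1.2 hp]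

lemma mem_Hsub_iff {n : ℕ} {r : G n} :
    r ∈ Hsub n ↔ (∀ i : Fin n, (i : ℕ) + 1 < n → r.u i = 0) ∧
      ∀ p : PairIdx n, (p.1.2 : ℕ) + 1 < n → r.v p = 0 := Iff.rfl

lemma mem_Gsub_iff {n : ℕ} {r : G n} :
    r ∈ Gsub n ↔ (∀ i : Fin n, (i : ℕ) + 1 = n → r.u i = 0) ∧
      ∀ p : PairIdx n, (p.1.2 : ℕ) + 1 = n → r.v p = 0 := Iff.rfl

/-- `H(n)` is a normal subgroup; conjugation preserves it. -/
lemma conj_mem_Hsub {n : ℕ} (s : G n) {a : G n} (ha : a ∈ Hsub n) :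
    s * a * s⁻¹ ∈ Hsub n := by
  obtain ⟨ha1, ha2⟩ := ha
  refine ⟨fun i hi => ?_, fun p hp => ?_⟩
  · simp [ha1 i hi]
  · have hj : (p.1.1 : ℕ) + 1 < n := by
      have h2 : (p.1.1 : ℕ) < (p.1.2 : ℕ) := p.2
      omega
    simp [ha2 p hp, ha1 p.1.2 hp, ha1 p.1.1 hj]

/-- The action `α_b(a) = b a b⁻¹` of `G(n-1)` on `H(n)`. -/
def conjH {n : ℕ} (b : Gsub n) (a : Hsub n) : Hsub n :=
  ⟨(b : G n) * (a : G n) * (b : G n)⁻¹, conj_mem_Hsub _ a.2⟩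

/-- The `H(n)`-part of the unique factorization `r = a·b`, `a ∈ H(n)`, `b ∈ G(n-1)`. -/
def hpart {n : ℕ} (r : G n) : Hsub n :=
  ⟨⟨fun i => if (i : ℕ) + 1 = n then r.u i else 0,
    fun p => if (p.1.2 : ℕ) + 1 = n then r.v p else 0⟩, by
    refine ⟨fun i hi => ?_, fun p hp => ?_⟩
    · exact if_neg (by omega)
    · exact if_neg (by omega)⟩

/-- The `G(n-1)`-part of the unique factorization `r = a·b`. -/
def gpart {n : ℕ} (r : G n) : Gsub n :=
  ⟨⟨fun i => if (i : ℕ) + 1 = n then 0 else r.u i,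
    fun p => if (p.1.2 : ℕ) + 1 = n then 0 else r.v p⟩, by
    refine ⟨fun i hi => ?_, fun p hp => ?_⟩
    · exact if_pos hi
    · exact if_pos hp⟩

/-- `r` indeed factors as `hpart r * gpart r`. -/
lemma hpart_mul_gpart {n : ℕ} (r : G n) : ((hpart r : G n)) * (gpart r : G n) = r := by
  refine G.ext ?_ ?_ <;> funext x
  · show (if ((x : ℕ)) + 1 = n then r.u x else 0) + (if (x : ℕ) + 1 = n then 0 else r.u x) = r.u x
    split <;> ring
  · show (if ((x.1.2 : ℕ)) + 1 = n then r.v x else 0) +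
      (if (x.1.2 : ℕ) + 1 = n then 0 else r.v x) +
      (if ((x.1.1 : ℕ)) + 1 = n then r.u x.1.1 else 0) *
        (if (x.1.2 : ℕ) + 1 = n then 0 else r.u x.1.2) = r.v x
    have h2 : (x.1.1 : ℕ) < (x.1.2 : ℕ) := x.2
    have h3 : (x.1.2 : ℕ) < n := x.1.2.isLt
    rcases eq_or_ne ((x.1.2 : ℕ) + 1) n with h | h
    · rw [if_pos h, if_pos h, if_pos h, if_neg (by omega)]; ring
    · rw [if_neg h, if_neg h, if_neg h, if_neg (show ¬((x.1.1 : ℕ) + 1 = n) by omega)]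
      ring

/-- An admissible pair `(σ_H, g)` (Mackey data with trivial multiplier on `G(n-1)`). -/
structure AdmissiblePair (n : ℕ) (σH : Hsub n → Hsub n → Circle)
    (g : Hsub n → Gsub n → Circle) : Prop where
  multH : IsMultiplier σH
  g_one_right : ∀ a : Hsub n, g a 1 = 1
  g_one_left : ∀ b : Gsub n, g 1 b = 1
  g_add : ∀ (a a' : Hsub n) (b : Gsub n),
    g (a * a') b = σH (conjH b a) (conjH b a') * (σH a a')⁻¹ * (g a b * g a' b)
  g_mul : ∀ (a : Hsub n) (b b' : Gsub n), g a (b * b') = g (conjH b' a) b * g a b'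

/-- An admissible triple `(σ_H, g, σ')`. -/
def AdmissibleTriple (n : ℕ) (σH : Hsub n → Hsub n → Circle)
    (g : Hsub n → Gsub n → Circle) (σ' : Gsub n → Gsub n → Circle) : Prop :=
  AdmissiblePair n σH g ∧ IsMultiplier σ'

/-- The map `σ_n(a′b, ab′) = σ_H(a′, α_b(a)) g(a,b) σ′(b,b′)` defined via the unique
factorizations. -/
noncomputable def sigmaN {n : ℕ} (σH : Hsub n → Hsub n → Circle) (g : Hsub n → Gsub n → Circle)
    (σ' : Gsub n → Gsub n → Circle) (r s : G n) : Circle :=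
  σH (hpart r) (conjH (gpart r) (hpart s)) * g (hpart s) (gpart r) *
    σ' (gpart r) (gpart s)

/-- The map `τ(a′b, ab′) = σ_H(a′, α_b(a)) g(a,b)` defined via the unique factorizations. -/
noncomputable def tauN {n : ℕ} (σH : Hsub n → Hsub n → Circle) (g : Hsub n → Gsub n → Circle)
    (r s : G n) : Circle :=
  σH (hpart r) (conjH (gpart r) (hpart s)) * g (hpart s) (gpart r)

/-- The generator `u_i`. -/
def uE {n : ℕ} (i : Fin n) : G n := ⟨fun j => if j = i then 1 else 0, fun _ => 0⟩

/-- The generator `v_{jk}`. -/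
def vE {n : ℕ} (j k : Fin n) : G n := ⟨fun _ => 0, fun p => if p.1 = (j, k) then 1 else 0⟩

/-- The last index `n` (i.e. `n-1` in `Fin n`). -/
def lastI (n : ℕ) (hn : 0 < n) : Fin n := ⟨n - 1, by omega⟩

/-- `u_n` as an element of `H(n)`. -/
def unH {n : ℕ} (hn : 0 < n) : Hsub n :=
  ⟨uE (lastI n hn), by
    refine ⟨fun i hi => ?_, fun p hp => rfl⟩
    have h : i ≠ lastI n hn := by
      intro h; apply absurd hi; rw [h]; show ¬ (n - 1) + 1 < n; omega
    simp [uE, h]⟩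

/-- `u_i` (for `i < n`) as an element of `G(n-1)`. -/
def uiG {n : ℕ} (i : Fin n) (hi : (i : ℕ) + 1 < n) : Gsub n :=
  ⟨uE i, by
    refine ⟨fun j hj => ?_, fun p hp => rfl⟩
    have h : j ≠ i := by intro h; rw [h] at hj; omega
    simp [uE, h]⟩

/-- `v_{in}` (for `i < n`) as an element of `H(n)`. -/
def vinH {n : ℕ} (i : Fin n) (hi : (i : ℕ) + 1 < n) : Hsub n :=
  ⟨vE i (lastI n (by omega)), by
    refine ⟨fun j hj => rfl, fun p hp => ?_⟩
    have h : p.1 ≠ (i, lastI n (by omega)) := by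
      intro h
      have h2 : (p.1.2 : ℕ) = n - 1 := by rw [h]; rfl
      omega
    simp [vE, h]⟩

/-- `v_{ij}` (for `j < n`) as an element of `G(n-1)`. -/
def vijG {n : ℕ} (i j : Fin n) (hj : (j : ℕ) + 1 < n) : Gsub n :=
  ⟨vE i j, by
    refine ⟨fun k hk => rfl, fun p hp => ?_⟩
    have h : p.1 ≠ (i, j) := by
      intro h
      have h2 : (p.1.2 : ℕ) = (j : ℕ) := by rw [h]
      omega
    simp [vE, h]⟩

/-- The "word part" `w(a)` of `a ∈ H(n)`. -/
def wH {n : ℕ} (a : Hsub n) : Hsub n :=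
  ⟨⟨(a : G n).u, fun _ => 0⟩,
    ⟨fun i hi => (mem_Hsub_iff.mp a.2).1 i hi, fun _ _ => rfl⟩⟩

/-- The "central part" `z(a)` of `a ∈ H(n)`. -/
def zH {n : ℕ} (a : Hsub n) : Hsub n :=
  ⟨⟨fun _ => 0, (a : G n).v⟩,
    ⟨fun _ _ => rfl, fun p hp => (mem_Hsub_iff.mp a.2).2 p hp⟩⟩

/-- The "word part" `w(b)` of `b ∈ G(n-1)`. -/
def wG {n : ℕ} (b : Gsub n) : Gsub n :=
  ⟨⟨(b : G n).u, fun _ => 0⟩,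
    ⟨fun i hi => (mem_Gsub_iff.mp b.2).1 i hi, fun _ _ => rfl⟩⟩

/-- The "central part" `z(b)` of `b ∈ G(n-1)`. -/
def zG {n : ℕ} (b : Gsub n) : Gsub n :=
  ⟨⟨fun _ => 0, (b : G n).v⟩,
    ⟨fun _ _ => rfl, fun p hp => (mem_Gsub_iff.mp b.2).2 p hp⟩⟩

/-- `g(v_{in}, u_j)`, as a total function (equal to `1` outside the admissible range). -/
noncomputable def gvu {n : ℕ} (g : Hsub n → Gsub n → Circle) (i j : Fin n) : Circle :=
  if h : (i : ℕ) + 1 < n ∧ (j : ℕ) + 1 < n then g (vinH i h.1) (uiG j h.2) else 1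

/-- `g(u_n, v_{ij})`, as a total function (equal to `1` outside the admissible range). -/
noncomputable def guv {n : ℕ} (g : Hsub n → Gsub n → Circle) (i j : Fin n) : Circle :=
  if h : (j : ℕ) + 1 < n then g (unH (by omega)) (vijG i j h) else 1

/-- A normalized pair `(σ_H, g)`: admissible, with `σ_H` of the standard `λ`-form, and
`g(u_n, u_i) = 1` for all `1 ≤ i ≤ n-1`. -/
def Normalized {n : ℕ} (hn : 0 < n) (σH : Hsub n → Hsub n → Circle)
    (g : Hsub n → Gsub n → Circle) (lam : Fin n → Circle) : Prop :=
  AdmissiblePair n σH g ∧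
  (∀ a' a : Hsub n, σH a' a =
    ∏ i ∈ Finset.univ.filter (fun i : Fin n => (i : ℕ) + 1 < n),
      lam i ^ (uc (a' : G n) (lastI n hn) * vc (a : G n) i (lastI n hn))) ∧
  ∀ (i : Fin n) (hi : (i : ℕ) + 1 < n), g (unH hn) (uiG i hi) = 1

/-- The multiplier `σ_λ` of `G n` attached to a family of parameters
`λ_{i,jk} ∈ 𝕋` (`1 ≤ i ≤ k`, `1 ≤ j < k ≤ n`). -/
noncomputable def sigmaLam {n : ℕ} (lam : Fin n → Fin n → Fin n → Circle) (r s : G n) : Circle :=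
  (∏ t ∈ Finset.univ.filter
      (fun t : Fin n × Fin n × Fin n => t.1 < t.2.1 ∧ t.2.1 < t.2.2),
    lam t.1 t.2.1 t.2.2 ^ (vc s t.2.1 t.2.2 * uc r t.1 + uc s t.2.2 * vc r t.1 t.2.1) *
    lam t.2.1 t.1 t.2.2 ^ (vc s t.1 t.2.2 * uc r t.2.1 +
      uc s t.2.2 * (uc r t.1 * uc r t.2.1 - vc r t.1 t.2.1))) *
  ∏ p ∈ Finset.univ.filter (fun p : Fin n × Fin n => p.1 < p.2),
    lam p.1 p.1 p.2 ^ (vc s p.1 p.2 * uc r p.1 +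
      uc s p.2 * (uc r p.1 * (uc r p.1 - 1) / 2)) *
    lam p.2 p.1 p.2 ^ (uc r p.2 * (vc s p.1 p.2 + uc r p.1 * uc s p.2) +
      uc r p.1 * (uc s p.2 * (uc s p.2 - 1) / 2))

/-- The extension of the parameter family to indices `i > k`, via
`λ_{k,ij} = λ_{i,jk}⁻¹ λ_{j,ik}` for `i < j < k`. -/
noncomputable def lamExt {n : ℕ} (lam : Fin n → Fin n → Fin n → Circle) (i j k : Fin n) : Circle :=
  if i ≤ k then lam i j k else (lam j k i)⁻¹ * lam k j i

/-!
An automorphism `φ` fixing every `v_{jk}` and sending `u_a` to `z_a u_a` with `z_a` central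
agrees on generators with `twist z : r ↦ r · ∏ₐ z_a ^ r_a`, hence equals it. Passing from
`σ_λ(r, s)` to `σ_λ(φ r, φ s)` only shifts the central coordinates by linear forms in the
`u`-coordinates, so every exponent in `σ_λ` changes by an integer bilinear form in
`(r_1, …, r_n)` and `(s_1, …, s_n)`. On `G(n)` each monomial `r_x s_y` is an integer
coboundary, of `-r_{xy}` for `x < y`, of `-r_x (r_x - 1) / 2` for `x = y` and of
`r_{yx} - r_x r_y` for `x > y`; hence the quotient of the two multipliers is a coboundary.
-/

section Coboundaries

variable (Γ M : Type*) [Group Γ] [CommGroup M]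

def coboundaries : Subgroup (Γ → Γ → M) :=
  MonoidHom.range
    { toFun := fun (β : Γ → M) r s => β r * β s * (β (r * s))⁻¹
      map_one' := by ext; simp
      map_mul' := fun β β' => by ext r s; simp only [Pi.mul_apply, mul_inv]; ac_rfl }

def intCoboundaries : AddSubgroup (Γ → Γ → ℤ) :=
  AddMonoidHom.range
    { toFun := fun (b : Γ → ℤ) r s => b r + b s - b (r * s)
      map_zero' := by ext; simp
      map_add' := fun b b' => by ext r s; simp only [Pi.add_apply]; ring }

variable {Γ M}

lemma mem_coboundaries_iff {Q : Γ → Γ → M} :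
    Q ∈ coboundaries Γ M ↔ ∃ β : Γ → M, ∀ r s, Q r s = β r * β s * (β (r * s))⁻¹ := by
  simp only [coboundaries, MonoidHom.mem_range, MonoidHom.coe_mk, OneHom.coe_mk, funext_iff]
  exact exists_congr fun β => forall_congr' fun r => forall_congr' fun s => eq_comm

lemma mem_intCoboundaries_iff {e : Γ → Γ → ℤ} :
    e ∈ intCoboundaries Γ ↔ ∃ b : Γ → ℤ, ∀ r s, e r s = b r + b s - b (r * s) := by
  simp only [intCoboundaries, AddMonoidHom.mem_range, AddMonoidHom.coe_mk, ZeroHom.coe_mk,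
    funext_iff]
  exact exists_congr fun b => forall_congr' fun r => forall_congr' fun s => eq_comm

lemma zpow_mem_coboundaries (θ : M) {e : Γ → Γ → ℤ} (he : e ∈ intCoboundaries Γ) :
    (fun r s => θ ^ e r s) ∈ coboundaries Γ M := by
  obtain ⟨b, hb⟩ := mem_intCoboundaries_iff.1 he
  exact mem_coboundaries_iff.2 ⟨fun r => θ ^ b r, fun r s => by
    rw [hb, zpow_sub, zpow_add]⟩

lemma zpow_div_zpow_mem_coboundaries (θ : M) {e e' : Γ → Γ → ℤ}
    (h : (fun r s => e' r s - e r s) ∈ intCoboundaries Γ) :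
    (fun r s => θ ^ e' r s / θ ^ e r s) ∈ coboundaries Γ M := by
  simpa only [zpow_sub, div_eq_mul_inv] using zpow_mem_coboundaries θ h

lemma mul_mem_coboundaries {Q Q' : Γ → Γ → M} (h : Q ∈ coboundaries Γ M)
    (h' : Q' ∈ coboundaries Γ M) : (fun r s => Q r s * Q' r s) ∈ coboundaries Γ M :=
  Subgroup.mul_mem _ h h'

lemma prod_mem_coboundaries {ι : Type*} (F : Finset ι) {Q : ι → Γ → Γ → M}
    (h : ∀ t ∈ F, Q t ∈ coboundaries Γ M) :
    (fun r s => ∏ t ∈ F, Q t r s) ∈ coboundaries Γ M := by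
  convert Subgroup.prod_mem _ h using 1
  ext r s
  simp only [Finset.prod_apply]

lemma similar_of_div_mem_coboundaries {σ τ : Γ → Γ → Circle}
    (h : (fun r s => τ r s / σ r s) ∈ coboundaries Γ Circle) : Similar σ τ := by
  obtain ⟨β, hβ⟩ := mem_coboundaries_iff.1 h
  exact ⟨β, fun r s => by rw [← hβ, div_mul_cancel]⟩

end Coboundaries

section Generation

variable {n : ℕ}

@[simp] lemma uE_u (i j : Fin n) : (uE i).u j = if j = i then 1 else 0 := rfl

@[simp] lemma uE_v (i : Fin n) (p : PairIdx n) : (uE i).v p = 0 := rfl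

@[simp] lemma vE_u (j k i : Fin n) : (vE j k).u i = 0 := rfl

@[simp] lemma vE_v (q p : PairIdx n) : (vE q.1.1 q.1.2).v p = if p = q then 1 else 0 := by
  simp [vE, ← Subtype.ext_iff]

lemma G.zpow_u (g : G n) (m : ℤ) (i : Fin n) : (g ^ m).u i = m * g.u i := by
  induction m using Int.induction_on with
  | zero => simp
  | succ m ih => rw [zpow_add_one, G.mul_u, ih]; ring
  | pred m ih => rw [zpow_sub_one, G.mul_u, G.inv_u, ih]; ring

lemma G.zpow_v_of_u_eq_zero {g : G n} (hg : ∀ i, g.u i = 0) (m : ℤ) (p : PairIdx n) :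
    (g ^ m).v p = m * g.v p := by
  induction m using Int.induction_on with
  | zero => simp
  | succ m ih => simp only [zpow_add_one, G.mul_v, ih, hg]; ring
  | pred m ih => simp only [zpow_sub_one, G.mul_v, G.inv_v, G.inv_u, ih, hg]; ring

lemma closure_uE_union_vE :
    Subgroup.closure (Set.range uE ∪ Set.range fun p : PairIdx n => vE p.1.1 p.1.2) = ⊤ := by
  set K := Subgroup.closure (Set.range uE ∪ Set.range fun p : PairIdx n => vE p.1.1 p.1.2)
  have huE (i : Fin n) (m : ℤ) : uE i ^ m ∈ K :=
    K.zpow_mem (Subgroup.subset_closure (Or.inl ⟨i, rfl⟩)) m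
  have hvE (p : PairIdx n) (m : ℤ) : vE p.1.1 p.1.2 ^ m ∈ K :=
    K.zpow_mem (Subgroup.subset_closure (Or.inr ⟨p, rfl⟩)) m
  have central (F : Finset (PairIdx n)) :
      ∀ r : G n, (∀ i, r.u i = 0) → (∀ p ∉ F, r.v p = 0) → r ∈ K := by
    induction F using Finset.induction_on with
    | empty =>
      intro r hu hv
      convert K.one_mem
      ext <;> simp_all
    | insert q F _ ih =>
      intro r hu hv
      have hr' : r * vE q.1.1 q.1.2 ^ (-r.v q) ∈ K := by
        refine ih _ (fun i => by simp [G.zpow_u, hu]) fun p hp => ?_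
        rw [G.mul_v, G.zpow_v_of_u_eq_zero (vE_u _ _), vE_v, hu]
        by_cases hpq : p = q
        · simp [hpq]
        · simp [hpq, hv p (by simp [hpq, hp])]
      simpa using K.mul_mem hr' (hvE q (r.v q))
  have all (F : Finset (Fin n)) : ∀ r : G n, (∀ i ∉ F, r.u i = 0) → r ∈ K := by
    induction F using Finset.induction_on with
    | empty => exact fun r hu => central Finset.univ r (by simpa using hu) (by simp)
    | insert q F _ ih =>
      intro r hu
      have hr' : r * uE q ^ (-r.u q) ∈ K := by
        refine ih _ fun i hi => ?_
        rw [G.mul_u, G.zpow_u, uE_u]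
        by_cases hiq : i = q
        · simp [hiq]
        · simp [hiq, hu i (by simp [hiq, hi])]
      simpa using K.mul_mem hr' (huE q (r.u q))
  exact eq_top_iff.2 fun r _ => all Finset.univ r (by simp)

lemma G.hom_ext {H : Type*} [Group H] {f g : G n →* H} (hu : ∀ i, f (uE i) = g (uE i))
    (hv : ∀ p : PairIdx n, f (vE p.1.1 p.1.2) = g (vE p.1.1 p.1.2)) : f = g :=
  MonoidHom.eq_of_eqOn_dense closure_uE_union_vE <| by
    rintro _ (⟨i, rfl⟩ | ⟨p, rfl⟩)
    exacts [hu i, hv p]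

end Generation

section Twist

variable {n : ℕ}

def twist (z : Fin n → G n) : G n →* G n where
  toFun r := ⟨r.u, fun p => r.v p + ∑ a, r.u a * (z a).v p⟩
  map_one' := by ext <;> simp
  map_mul' r s := by
    ext p
    · rfl
    · simp only [G.mul_v, G.mul_u, add_mul, Finset.sum_add_distrib]
      ring

lemma uc_twist (z : Fin n → G n) (r : G n) (i : Fin n) : uc (twist z r) i = uc r i := rfl

lemma vc_twist (z : Fin n → G n) (r : G n) (j k : Fin n) :
    vc (twist z r) j k = vc r j k + ∑ a, uc r a * vc (z a) j k := by
  by_cases h : j < k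
  · simp only [vc, dif_pos h]
    rfl
  · simp [vc, h]

lemma eq_twist {f : G n →* G n} {z : Fin n → G n} (hz : ∀ a i, (z a).u i = 0)
    (hu : ∀ a, f (uE a) = z a * uE a)
    (hv : ∀ p : PairIdx n, f (vE p.1.1 p.1.2) = vE p.1.1 p.1.2) : f = twist z := by
  refine G.hom_ext (fun a => ?_) fun p => ?_
  · rw [hu]
    ext <;> simp [twist, hz]
  · rw [hv]
    ext <;> simp [twist]

end Twist

section BilinearCoboundaries

variable {n : ℕ}

lemma uc_mul (r s : G n) (i : Fin n) : uc (r * s) i = uc r i + uc s i := rfl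

lemma vc_mul (r s : G n) {j k : Fin n} (h : j < k) :
    vc (r * s) j k = vc r j k + vc s j k + uc r j * uc s k := by
  simp only [vc, dif_pos h]
  rfl

lemma add_mul_pred_ediv_two (a b : ℤ) :
    (a + b) * (a + b - 1) / 2 = a * (a - 1) / 2 + b * (b - 1) / 2 + a * b := by
  have hab : (a + b) * (a + b - 1) = a * (a - 1) + b * (b - 1) + 2 * (a * b) := by ring
  obtain ⟨p, hp⟩ := Int.even_mul_pred_self a
  obtain ⟨q, hq⟩ := Int.even_mul_pred_self b
  rw [hab, hp, hq]
  omega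

lemma uc_mul_uc_mem_intCoboundaries (x y : Fin n) :
    (fun r s : G n => uc r x * uc s y) ∈ intCoboundaries (G n) := by
  rw [mem_intCoboundaries_iff]
  rcases lt_trichotomy x y with h | rfl | h
  · exact ⟨fun r => -vc r x y, fun r s => by beta_reduce; rw [vc_mul r s h]; ring⟩
  · refine ⟨fun r => -(uc r x * (uc r x - 1) / 2), fun r s => ?_⟩
    beta_reduce
    rw [uc_mul, add_mul_pred_ediv_two]
    ring
  · exact ⟨fun r => vc r y x - uc r x * uc r y, fun r s => by
      beta_reduce; rw [vc_mul r s h, uc_mul, uc_mul]; ring⟩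

lemma uc_mul_sum_mem_intCoboundaries (x : Fin n) (d : Fin n → ℤ) :
    (fun r s : G n => uc r x * ∑ a, uc s a * d a) ∈ intCoboundaries (G n) := by
  have h : (fun r s : G n => uc r x * ∑ a, uc s a * d a) =
      ∑ a, d a • fun r s : G n => uc r x * uc s a := by
    ext r s
    simp only [Finset.sum_apply, Pi.smul_apply, smul_eq_mul, Finset.mul_sum]
    exact Finset.sum_congr rfl fun a _ => by ring
  rw [h]
  exact sum_mem fun a _ => zsmul_mem (uc_mul_uc_mem_intCoboundaries x a) _

lemma sum_mul_uc_mem_intCoboundaries (y : Fin n) (d : Fin n → ℤ) :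
    (fun r s : G n => (∑ a, uc r a * d a) * uc s y) ∈ intCoboundaries (G n) := by
  have h : (fun r s : G n => (∑ a, uc r a * d a) * uc s y) =
      ∑ a, d a • fun r s : G n => uc r a * uc s y := by
    ext r s
    simp only [Finset.sum_apply, Pi.smul_apply, smul_eq_mul, Finset.sum_mul]
    exact Finset.sum_congr rfl fun a _ => by ring
  rw [h]
  exact sum_mem fun a _ => zsmul_mem (uc_mul_uc_mem_intCoboundaries a y) _

theorem sigmaLam_comp_div_mem_coboundaries (lam : Fin n → Fin n → Fin n → Circle)
    (d : Fin n → Fin n → Fin n → ℤ) (ψ : G n → G n) (hu : ∀ r i, uc (ψ r) i = uc r i)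
    (hv : ∀ r j k, vc (ψ r) j k = vc r j k + ∑ a, uc r a * d a j k) :
    (fun r s => sigmaLam lam (ψ r) (ψ s) / sigmaLam lam r s) ∈ coboundaries (G n) Circle := by
  simp only [sigmaLam, hu, hv, mul_div_mul_comm, ← Finset.prod_div_distrib]
  refine mul_mem_coboundaries (prod_mem_coboundaries _ fun t _ => mul_mem_coboundaries ?_ ?_)
    (prod_mem_coboundaries _ fun p _ => mul_mem_coboundaries ?_ ?_) <;>
    refine zpow_div_zpow_mem_coboundaries _ ?_
  · convert add_mem (uc_mul_sum_mem_intCoboundaries t.1 (d · t.2.1 t.2.2))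
      (sum_mul_uc_mem_intCoboundaries t.2.2 (d · t.1 t.2.1)) using 1
    ext r s
    simp only [Pi.add_apply]
    ring
  · convert sub_mem (uc_mul_sum_mem_intCoboundaries t.2.1 (d · t.1 t.2.2))
      (sum_mul_uc_mem_intCoboundaries t.2.2 (d · t.1 t.2.1)) using 1
    ext r s
    simp only [Pi.sub_apply]
    ring
  · convert uc_mul_sum_mem_intCoboundaries p.1 (d · p.1 p.2) using 1
    ext r s
    ring
  · convert uc_mul_sum_mem_intCoboundaries p.2 (d · p.1 p.2) using 1
    ext r s
    ring

end BilinearCoboundaries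

theorem sigmaLam_comp_central_aut_similar_general (n : ℕ)
    (lam : Fin n → Fin n → Fin n → Circle) (φ : MulAut (G n))
    (hv : ∀ p : PairIdx n, φ (vE p.1.1 p.1.2) = vE p.1.1 p.1.2)
    (hu : ∀ i : Fin n, ∃ z : G n, (∀ j, z.u j = 0) ∧ φ (uE i) = z * uE i) :
    Similar (sigmaLam lam) (fun r s => sigmaLam lam (φ r) (φ s)) := by
  choose z hz hφu using hu
  have hφ : (φ : G n →* G n) = twist z := eq_twist hz hφu hv
  refine similar_of_div_mem_coboundaries ?_
  simp only [← MonoidHom.coe_coe φ, hφ]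
  exact sigmaLam_comp_div_mem_coboundaries lam _ _ (uc_twist z) (vc_twist z)

/-- if `φ ∈ Aut(G(n))` fixes all `v_{jk}` and maps each `u_i` to
`z_i u_i` with `z_i` central, then `σ_λ∘(φ×φ)` is similar to `σ_λ`. -/
theorem sigmaLam_comp_central_aut_similar (n : ℕ) (hn : 2 ≤ n)
    (lam : Fin n → Fin n → Fin n → Circle) (φ : MulAut (G n))
    (hv : ∀ p : PairIdx n, φ (vE p.1.1 p.1.2) = vE p.1.1 p.1.2)
    (hu : ∀ i : Fin n, ∃ z : G n, (∀ j, z.u j = 0) ∧ φ (uE i) = z * uE i) :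
    Similar (sigmaLam lam) (fun r s => sigmaLam lam (φ r) (φ s)) :=
  sigmaLam_comp_central_aut_similar_general n lam φ hv hu

end FreeNilp
end

section
/- Let Γ be a group and let U_1, U_2, U_3, V_{12}, V_{13}, V_{23} be elements of Γ, and let μ_{i,jk} (for 1 ≤ i ≤ 3 and (j,k) ∈ {(1,2),(1,3),(2,3)}) be elements of the center of Γ, such that: [V_{jk}, V_{lm}] = e for all (j,k), (l,m) ∈ {(1,2),(1,3),(2,3)}; [U_i, V_{jk}] = μ_{i,jk} for all 1 ≤ i ≤ 3 and (j,k) ∈ {(1,2),(1,3),(2,3)}; and [U_j, U_k] = V_{jk} for 1 ≤ j < k ≤ 3. Then necessarily μ_{2,13} = μ_{1,23} · μ_{3,12}. -/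
/-!
Expanding the Hall–Witt identity for `U₁, U₂, U₃` turns it into the Jacobi identity
`⁅U₁, V₂₃⁆ * ⁅U₂, V₁₃⁻¹⁆ * ⁅U₃, V₁₂⁆ = 1`, because the `V`'s commute with each other and
conjugating a central commutator does nothing; since `⁅U₂, V₁₃⁻¹⁆ = μ₂₁₃⁻¹`, this is the claim.
-/

open scoped commutatorElement

namespace Group

variable {G : Type*} [Group G]

theorem mul_mul_inv_eq_self_of_mem_center {z : G} (hz : z ∈ Subgroup.center G) (g : G) :
    g * z * g⁻¹ = z := by
  rw [Subgroup.mem_center_iff.mp hz, mul_inv_cancel_right]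

theorem commutatorElement_conj_left_of_commute {a b z : G} (h : Commute ⁅a, b⁆ z) :
    ⁅a * b * a⁻¹, z⁆ = ⁅a, b⁆ * ⁅b, z⁆ * ⁅a, b⁆⁻¹ := by
  rw [show a * b * a⁻¹ = ⁅a, b⁆ * b by group, commutatorElement_mul_left_eq_conj_mul,
    commutatorElement_eq_one_iff_commute.mpr h, mul_one]

theorem commutatorElement_inv_right_of_mem_center {a b : G} (h : ⁅a, b⁆ ∈ Subgroup.center G) :
    ⁅a, b⁻¹⁆ = ⁅a, b⁆⁻¹ := by
  rw [commutatorElement_inv_right, ← commutatorElement_inv]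
  conv_rhs => rw [← mul_mul_inv_eq_self_of_mem_center (Subgroup.inv_mem _ h) b⁻¹, inv_inv]

/-- Centrality of the first term follows from that of the other two. -/
theorem commutatorElement_jacobi {a b c : G}
    (hab_bc : Commute ⁅a, b⁆ ⁅b, c⁆) (hbc_ca : Commute ⁅b, c⁆ ⁅c, a⁆)
    (hca_ab : Commute ⁅c, a⁆ ⁅a, b⁆)
    (hb : ⁅b, ⁅c, a⁆⁆ ∈ Subgroup.center G) (hc : ⁅c, ⁅a, b⁆⁆ ∈ Subgroup.center G) :
    ⁅a, ⁅b, c⁆⁆ * ⁅b, ⁅c, a⁆⁆ * ⁅c, ⁅a, b⁆⁆ = 1 := by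
  have hall_witt := commutatorElement_conj_commutatorElement_mul a b c
  rw [commutatorElement_conj_left_of_commute hca_ab.symm,
    commutatorElement_conj_left_of_commute hbc_ca.symm,
    commutatorElement_conj_left_of_commute hab_bc.symm,
    mul_mul_inv_eq_self_of_mem_center hb, mul_mul_inv_eq_self_of_mem_center hc] at hall_witt
  have hconj : ⁅c, a⁆ * ⁅a, ⁅b, c⁆⁆ * ⁅c, a⁆⁻¹ = ⁅b, ⁅c, a⁆⁆⁻¹ * ⁅c, ⁅a, b⁆⁆⁻¹ :=
    eq_inv_mul_of_mul_eq (eq_inv_of_mul_eq_one_left hall_witt)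
  have ha : ⁅a, ⁅b, c⁆⁆ = ⁅b, ⁅c, a⁆⁆⁻¹ * ⁅c, ⁅a, b⁆⁆⁻¹ :=
    (isConj_iff.mpr ⟨_, hconj⟩).eq_of_right_mem_center
      (Subgroup.mul_mem _ (Subgroup.inv_mem _ hb) (Subgroup.inv_mem _ hc))
  rw [ha, mul_assoc _ _ ⁅b, ⁅c, a⁆⁆, Subgroup.mem_center_iff.mp hb]
  group

end Group

theorem heisenberg_scalar_dependency_general {Γ : Type*} [Group Γ]
    (U₁ U₂ U₃ V₁₂ V₁₃ V₂₃ μ₁₂₃ μ₂₁₃ μ₃₁₂ : Γ)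
    (hc₅ : μ₂₁₃ ∈ Subgroup.center Γ) (hc₇ : μ₃₁₂ ∈ Subgroup.center Γ)
    (hVV₁ : ⁅V₁₂, V₁₃⁆ = 1) (hVV₂ : ⁅V₁₂, V₂₃⁆ = 1) (hVV₃ : ⁅V₁₃, V₂₃⁆ = 1)
    (hUV₃ : ⁅U₁, V₂₃⁆ = μ₁₂₃) (hUV₅ : ⁅U₂, V₁₃⁆ = μ₂₁₃) (hUV₇ : ⁅U₃, V₁₂⁆ = μ₃₁₂)
    (hUU₁ : ⁅U₁, U₂⁆ = V₁₂) (hUU₂ : ⁅U₁, U₃⁆ = V₁₃) (hUU₃ : ⁅U₂, U₃⁆ = V₂₃) :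
    μ₂₁₃ = μ₁₂₃ * μ₃₁₂ := by
  have hU₃₁ : ⁅U₃, U₁⁆ = V₁₃⁻¹ := by rw [← hUU₂, commutatorElement_inv]
  have hμ₂₃₁ : ⁅U₂, ⁅U₃, U₁⁆⁆ = μ₂₁₃⁻¹ := by
    rw [hU₃₁, Group.commutatorElement_inv_right_of_mem_center (hUV₅ ▸ hc₅), hUV₅]
  have hV₁₂₁₃ := commutatorElement_eq_one_iff_commute.mp hVV₁
  have hV₁₂₂₃ := commutatorElement_eq_one_iff_commute.mp hVV₂
  have hV₁₃₂₃ := commutatorElement_eq_one_iff_commute.mp hVV₃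
  have hjacobi := Group.commutatorElement_jacobi (a := U₁) (b := U₂) (c := U₃)
    (by rwa [hUU₁, hUU₃]) (by rw [hUU₃, hU₃₁]; exact hV₁₃₂₃.symm.inv_right)
    (by rw [hU₃₁, hUU₁]; exact hV₁₂₁₃.symm.inv_left)
    (hμ₂₃₁ ▸ Subgroup.inv_mem _ hc₅) (by rwa [hUU₁, hUV₇])
  have hμ : μ₁₂₃ * μ₂₁₃⁻¹ * μ₃₁₂ = 1 := by rwa [hUU₃, hUV₃, hμ₂₃₁, hUU₁, hUV₇] at hjacobi
  rw [mul_assoc, ← Subgroup.mem_center_iff.mp (Subgroup.inv_mem _ hc₅), ← mul_assoc,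
    mul_inv_eq_one] at hμ
  exact hμ.symm

/-- among the nine central commutator scalars `μ_{i,jk}` attached to
Heisenberg-type generators `U₁, U₂, U₃`, necessarily `μ_{2,13} = μ_{1,23} · μ_{3,12}`. -/
theorem heisenberg_scalar_dependency {Γ : Type*} [Group Γ]
    (U₁ U₂ U₃ V₁₂ V₁₃ V₂₃ μ₁₁₂ μ₁₁₃ μ₁₂₃ μ₂₁₂ μ₂₁₃ μ₂₂₃ μ₃₁₂ μ₃₁₃ μ₃₂₃ : Γ)
    (hc₁ : μ₁₁₂ ∈ Subgroup.center Γ) (hc₂ : μ₁₁₃ ∈ Subgroup.center Γ)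
    (hc₃ : μ₁₂₃ ∈ Subgroup.center Γ) (hc₄ : μ₂₁₂ ∈ Subgroup.center Γ)
    (hc₅ : μ₂₁₃ ∈ Subgroup.center Γ) (hc₆ : μ₂₂₃ ∈ Subgroup.center Γ)
    (hc₇ : μ₃₁₂ ∈ Subgroup.center Γ) (hc₈ : μ₃₁₃ ∈ Subgroup.center Γ)
    (hc₉ : μ₃₂₃ ∈ Subgroup.center Γ)
    (hVV₁ : ⁅V₁₂, V₁₃⁆ = 1) (hVV₂ : ⁅V₁₂, V₂₃⁆ = 1) (hVV₃ : ⁅V₁₃, V₂₃⁆ = 1)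
    (hUV₁ : ⁅U₁, V₁₂⁆ = μ₁₁₂) (hUV₂ : ⁅U₁, V₁₃⁆ = μ₁₁₃) (hUV₃ : ⁅U₁, V₂₃⁆ = μ₁₂₃)
    (hUV₄ : ⁅U₂, V₁₂⁆ = μ₂₁₂) (hUV₅ : ⁅U₂, V₁₃⁆ = μ₂₁₃) (hUV₆ : ⁅U₂, V₂₃⁆ = μ₂₂₃)
    (hUV₇ : ⁅U₃, V₁₂⁆ = μ₃₁₂) (hUV₈ : ⁅U₃, V₁₃⁆ = μ₃₁₃) (hUV₉ : ⁅U₃, V₂₃⁆ = μ₃₂₃)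
    (hUU₁ : ⁅U₁, U₂⁆ = V₁₂) (hUU₂ : ⁅U₁, U₃⁆ = V₁₃) (hUU₃ : ⁅U₂, U₃⁆ = V₂₃) :
    μ₂₁₃ = μ₁₂₃ * μ₃₁₂ :=
  heisenberg_scalar_dependency_general U₁ U₂ U₃ V₁₂ V₁₃ V₂₃ μ₁₂₃ μ₂₁₃ μ₃₁₂ hc₅ hc₇ hVV₁ hVV₂ hVV₃
    hUV₃ hUV₅ hUV₇ hUU₁ hUU₂ hUU₃
end
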